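/- arXiv:2401.09704 — 11 statements merged into one kernel-verified Lean document; each statement's English description precedes it below -/
import Mathlib

section
/- Let f(x) be a non-constant Laurent polynomial over ℚ in one variable satisfying f(x) = f(2/x) (as rational functions). Then there exists a polynomial g(X) ∈ ℚ[X] such that f(x) = g(x + 2/x). -/
/-!
Let `x` be transcendental (here `x = RatFunc.X`, `a = 2`). Multiplying `p` and `x ^ n` by a
common power of `x` we may assume `deg p ≤ 2n`. Clearing denominators,
`p(x) / x^n = p(a/x) / (a/x)^n` then says that `a^n p` is the reflection of `p(aX)` at degree
`2n`, i.e. the coefficients `c_k` of `p` satisfy `c_{n-i} = a^i c_{n+i}`. Hence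
`p(x) / x^n = c_n + ∑_{i ≥ 1} c_{n+i} (x^i + (a/x)^i)`, and `x^i + (a/x)^i = D_i(x + a/x)` for the
Dickson polynomial `D_i = dickson 1 a i`.
-/

open Polynomial Finset

theorem sum_range_two_mul_add_one_add {M : Type*} [AddCommMonoid M] (f : ℕ → M) (n : ℕ) :
    ∑ k ∈ range (2 * n + 1), f k + f n = ∑ i ∈ range (n + 1), (f (n + i) + f (n - i)) := by
  have hlow : ∑ i ∈ range (n + 1), f (n - i) = ∑ k ∈ range n, f k + f n := by
    rw [← sum_range_succ]
    simpa using sum_range_reflect f (n + 1)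
  rw [sum_add_distrib, hlow, show 2 * n + 1 = n + (n + 1) by omega, sum_range_add]
  abel

theorem aeval_dickson_one_add_of_mul_eq {R A : Type*} [CommRing R] [CommRing A] [Algebra R A]
    (a : R) {x y : A} (h : x * y = algebraMap R A a) :
    ∀ n, aeval (x + y) (dickson 1 a n) = x ^ n + y ^ n
  | 0 => by simp only [dickson_zero, pow_zero]; norm_num [map_ofNat]
  | 1 => by simp
  | n + 2 => by
    simp only [dickson_add_two, map_sub, map_mul, aeval_X, aeval_C,
      aeval_dickson_one_add_of_mul_eq a h n, aeval_dickson_one_add_of_mul_eq a h (n + 1)]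
    linear_combination (x ^ n + y ^ n) * h

theorem Transcendental.ne_zero {R A : Type*} [CommRing R] [Nontrivial R] [Ring A] [Algebra R A]
    {x : A} (hx : Transcendental R x) : x ≠ 0 := by
  rintro rfl
  exact hx isAlgebraic_zero

section

variable {K L : Type*} [Field K] [Field L] [Algebra K L]

theorem pow_mul_pow_add_div_pow_of_le {y : L} (hy : y ≠ 0) (a : L) {i n : ℕ} (hi : i ≤ n) :
    y ^ n * (y ^ i + (a / y) ^ i) = y ^ (n + i) + a ^ i * y ^ (n - i) := by
  obtain ⟨k, rfl⟩ := Nat.exists_eq_add_of_le hi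
  rw [Nat.add_sub_cancel_left, div_pow]
  field_simp
  ring

theorem aeval_mul_X_pow_div_pow (p : K[X]) (n s : ℕ) {y : L} (hy : y ≠ 0) :
    aeval y (p * X ^ s) / y ^ (n + s) = aeval y p / y ^ n := by
  rw [map_mul, map_pow, aeval_X, pow_add, mul_div_mul_right _ _ (pow_ne_zero s hy)]

theorem exists_aeval_eq_pow_mul_aeval_add_div (a : K) {p : K[X]} {n : ℕ}
    (hp : p.natDegree ≤ 2 * n) (hcoeff : ∀ i ≤ n, p.coeff (n - i) = a ^ i * p.coeff (n + i))
    {y : L} (hy : y ≠ 0) :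
    ∃ g : K[X], aeval y p = y ^ n * aeval (y + algebraMap K L a / y) g := by
  -- `dickson 1 a 0 = 2`, so the `i = 0` term counts `c_n` twice.
  refine ⟨∑ i ∈ range (n + 1), C (p.coeff (n + i)) * dickson 1 a i - C (p.coeff n), ?_⟩
  have hdickson := aeval_dickson_one_add_of_mul_eq a (mul_div_cancel₀ (algebraMap K L a) hy)
  have hsplit := sum_range_two_mul_add_one_add (fun k ↦ p.coeff k • y ^ k) n
  rw [← aeval_eq_sum_range' (by omega)] at hsplit
  rw [map_sub, map_sum, aeval_C, mul_sub, mul_sum, eq_sub_iff_add_eq, mul_comm,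
    ← Algebra.smul_def, hsplit]
  refine sum_congr rfl fun i hi ↦ ?_
  have hin : i ≤ n := Nat.lt_succ_iff.mp (mem_range.mp hi)
  rw [map_mul, aeval_C, hdickson, mul_left_comm, pow_mul_pow_add_div_pow_of_le hy _ hin,
    hcoeff i hin]
  simp only [Algebra.smul_def, map_mul, map_pow]
  ring

variable {x : L}

theorem C_pow_mul_eq_reflect_comp_of_div_pow_eq (hx : Transcendental K x) {a : K} (ha : a ≠ 0)
    {p : K[X]} {n : ℕ} (hp : p.natDegree ≤ 2 * n)
    (hsym : aeval x p / x ^ n = aeval (algebraMap K L a / x) p / (algebraMap K L a / x) ^ n) :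
    C (a ^ n) * p = reflect (2 * n) (p.comp (C a * X)) := by
  have hx0 := hx.ne_zero
  have hA : algebraMap K L a ≠ 0 := by simpa using ha
  let := invertibleOfNonzero (inv_ne_zero hx0)
  have hdeg : (p.comp (C a * X)).natDegree ≤ 2 * n :=
    natDegree_comp_le.trans (by rwa [natDegree_C_mul_X a ha, mul_one])
  have hrefl := eval₂_reflect_mul_pow (algebraMap K L) x⁻¹ (2 * n) _ hdeg
  rw [invOf_eq_inv, inv_inv, ← aeval_def, ← aeval_def, aeval_comp] at hrefl
  simp only [map_mul, aeval_C, aeval_X, ← div_eq_mul_inv] at hrefl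
  apply transcendental_iff_injective.mp hx
  rw [map_mul, aeval_C, map_pow]
  rw [← hrefl, div_eq_div_iff (pow_ne_zero _ hx0) (pow_ne_zero _ (div_ne_zero hA hx0))] at hsym
  calc algebraMap K L a ^ n * aeval x p
      = aeval x p * (algebraMap K L a / x) ^ n * x ^ n := by
        rw [div_pow]; field_simp
    _ = _ := by
        rw [hsym, inv_pow, pow_mul']; field_simp

theorem coeff_sub_eq_pow_mul_coeff_add_of_div_pow_eq (hx : Transcendental K x) {a : K}
    (ha : a ≠ 0) {p : K[X]} {n : ℕ} (hp : p.natDegree ≤ 2 * n)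
    (hsym : aeval x p / x ^ n = aeval (algebraMap K L a / x) p / (algebraMap K L a / x) ^ n)
    {i : ℕ} (hi : i ≤ n) : p.coeff (n - i) = a ^ i * p.coeff (n + i) := by
  have h := congrArg (coeff · (n - i)) (C_pow_mul_eq_reflect_comp_of_div_pow_eq hx ha hp hsym)
  simp only [coeff_C_mul, coeff_reflect, comp_C_mul_X_coeff, revAt_le (by omega : n - i ≤ 2 * n),
    show 2 * n - (n - i) = n + i by omega, pow_add] at h
  apply mul_left_cancel₀ (pow_ne_zero n ha)
  linear_combination h

theorem exists_aeval_add_div_of_div_pow_eq (hx : Transcendental K x) {a : K} (ha : a ≠ 0)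
    (p : K[X]) (n : ℕ)
    (hsym : aeval x p / x ^ n = aeval (algebraMap K L a / x) p / (algebraMap K L a / x) ^ n) :
    ∃ g : K[X], aeval x p / x ^ n = aeval (x + algebraMap K L a / x) g := by
  have hx0 := hx.ne_zero
  have hax : algebraMap K L a / x ≠ 0 := div_ne_zero (by simpa using ha) hx0
  set s := p.natDegree
  have hdeg : (p * X ^ s).natDegree ≤ 2 * (n + s) :=
    natDegree_mul_le.trans (by rw [natDegree_X_pow]; omega)
  rw [← aeval_mul_X_pow_div_pow p n s hx0, ← aeval_mul_X_pow_div_pow p n s hax] at hsym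
  obtain ⟨g, hg⟩ := exists_aeval_eq_pow_mul_aeval_add_div a hdeg
    (fun i hi ↦ coeff_sub_eq_pow_mul_coeff_add_of_div_pow_eq hx ha hdeg hsym hi) hx0
  refine ⟨g, ?_⟩
  rw [← aeval_mul_X_pow_div_pow p n s hx0, hg, mul_div_cancel_left₀ _ (pow_ne_zero _ hx0)]

end

theorem stmt_0_general (p : Polynomial ℚ) (n : ℕ)
    (hsym : (Polynomial.aeval (RatFunc.X : RatFunc ℚ) p) / RatFunc.X ^ n
        = (Polynomial.aeval (2 / RatFunc.X : RatFunc ℚ) p) / (2 / RatFunc.X) ^ n) :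
    ∃ g : Polynomial ℚ,
      (Polynomial.aeval (RatFunc.X : RatFunc ℚ) p) / RatFunc.X ^ n
        = Polynomial.aeval (RatFunc.X + 2 / RatFunc.X : RatFunc ℚ) g := by
  -- The statement's ℚ-algebra structure on `RatFunc ℚ` is `DivisionRing.toRatAlgebra`, not the
  -- one `RatFunc.transcendental_X` is stated for.
  have hX : Transcendental ℚ (RatFunc.X : RatFunc ℚ) := by
    convert RatFunc.transcendental_X
    exact Subsingleton.elim _ _
  have h := exists_aeval_add_div_of_div_pow_eq hX (two_ne_zero (α := ℚ)) p n
  rw [map_ofNat] at h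
  exact h hsym

/-- Any non-constant Laurent polynomial `f(x) = p(x)/x^n` over `ℚ` satisfying
`f(x) = f(2/x)` as rational functions is of the form `g(x + 2/x)` for a
polynomial `g ∈ ℚ[X]`. -/
theorem stmt_0 (p : Polynomial ℚ) (n : ℕ)
    (hnc : ¬ ∃ c : ℚ,
      (Polynomial.aeval (RatFunc.X : RatFunc ℚ) p) / RatFunc.X ^ n = RatFunc.C c)
    (hsym : (Polynomial.aeval (RatFunc.X : RatFunc ℚ) p) / RatFunc.X ^ n
        = (Polynomial.aeval (2 / RatFunc.X : RatFunc ℚ) p) / (2 / RatFunc.X) ^ n) :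
    ∃ g : Polynomial ℚ,
      (Polynomial.aeval (RatFunc.X : RatFunc ℚ) p) / RatFunc.X ^ n
        = Polynomial.aeval (RatFunc.X + 2 / RatFunc.X : RatFunc ℚ) g :=
  stmt_0_general p n hsym
end

section
/- The rational function T(x₁,x₂) = (x₂⁴ + x₁² + 2x₁ + 1)/(x₁x₂²) satisfies T((x₂⁴+1)/x₁, x₂) = T(x₁,x₂) and T(x₁, (x₁+1)/x₂) = T(x₁,x₂), as identities of rational functions in ℚ(x₁,x₂). -/
/-!
Both mutations are exchange relations `x x' = m`, and `T` is symmetric in the exchanged pair: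
with `x₁ x₁' = x₂⁴ + 1` one has `T = (x₁ + x₁' + 2) / x₂²`, and with `x₂ x₂' = x₁ + 1` one has
`T = (x₂² + x₂'²) / x₁`.
-/

open MvPolynomial

/-- The field of rational functions `ℚ(x₁, x₂)`. -/
noncomputable abbrev QF := FractionRing (MvPolynomial (Fin 2) ℚ)

noncomputable def x₁ : QF := algebraMap (MvPolynomial (Fin 2) ℚ) QF (X 0)
noncomputable def x₂ : QF := algebraMap (MvPolynomial (Fin 2) ℚ) QF (X 1)

/-- The mutation invariant of affine type `A₂⁽²⁾`. -/
noncomputable def T (a b : QF) : QF := (b ^ 4 + a ^ 2 + 2 * a + 1) / (a * b ^ 2)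

theorem T_eq_of_mul_eq_pow_four_add_one {a a' b : QF} (h : a * a' = b ^ 4 + 1) (ha : a ≠ 0) :
    T a b = (a + a' + 2) / b ^ 2 := by
  rw [T, ← mul_div_mul_left (a + a' + 2) (b ^ 2) ha]
  congr 1
  linear_combination -h

theorem T_eq_of_mul_eq_add_one {a b b' : QF} (h : b * b' = a + 1) (hb : b ≠ 0) :
    T a b = (b ^ 2 + b' ^ 2) / a := by
  rw [T, mul_comm a, ← mul_div_mul_left (b ^ 2 + b' ^ 2) a (pow_ne_zero 2 hb)]
  congr 1
  linear_combination (-(a + 1) - b * b') * h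

theorem T_mutate_fst {a b : QF} (ha : a ≠ 0) (hb : b ^ 4 + 1 ≠ 0) :
    T ((b ^ 4 + 1) / a) b = T a b := by
  have hmul : a * ((b ^ 4 + 1) / a) = b ^ 4 + 1 := mul_div_cancel₀ _ ha
  rw [T_eq_of_mul_eq_pow_four_add_one (by rwa [mul_comm]) (div_ne_zero hb ha),
    T_eq_of_mul_eq_pow_four_add_one hmul ha, add_comm a]

theorem T_mutate_snd {a b : QF} (hb : b ≠ 0) (ha : a + 1 ≠ 0) :
    T a ((a + 1) / b) = T a b := by
  have hmul : b * ((a + 1) / b) = a + 1 := mul_div_cancel₀ _ hb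
  rw [T_eq_of_mul_eq_add_one (by rwa [mul_comm]) (div_ne_zero ha hb),
    T_eq_of_mul_eq_add_one hmul hb, add_comm]

theorem algebraMap_ne_zero_of_coeff_zero_ne_zero {σ R : Type*} [CommRing R]
    {p : MvPolynomial σ R} (hp : coeff 0 p ≠ 0) :
    algebraMap (MvPolynomial σ R) (FractionRing (MvPolynomial σ R)) p ≠ 0 :=
  IsFractionRing.to_map_eq_zero_iff.not.mpr fun h ↦ hp (by rw [h, coeff_zero])

theorem x₁_ne_zero : x₁ ≠ 0 :=
  IsFractionRing.to_map_eq_zero_iff.not.mpr (X_ne_zero 0)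

theorem x₂_ne_zero : x₂ ≠ 0 :=
  IsFractionRing.to_map_eq_zero_iff.not.mpr (X_ne_zero 1)

theorem x₁_add_one_ne_zero : x₁ + 1 ≠ 0 := by
  have := algebraMap_ne_zero_of_coeff_zero_ne_zero
    (p := (X 0 + 1 : MvPolynomial (Fin 2) ℚ)) (by simp [coeff_X])
  simpa [x₁] using this

theorem x₂_pow_four_add_one_ne_zero : x₂ ^ 4 + 1 ≠ 0 := by
  have := algebraMap_ne_zero_of_coeff_zero_ne_zero
    (p := (X 1 ^ 4 + 1 : MvPolynomial (Fin 2) ℚ)) (by simp [coeff_X_pow])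
  simpa [x₂] using this

/-- `T(x₁,x₂) = (x₂⁴+x₁²+2x₁+1)/(x₁x₂²)` is invariant under the mutations
`μ₁(x₁,x₂) = ((x₂⁴+1)/x₁, x₂)` and `μ₂(x₁,x₂) = (x₁, (x₁+1)/x₂)`. -/
theorem stmt_2 :
    T ((x₂ ^ 4 + 1) / x₁) x₂ = T x₁ x₂ ∧ T x₁ ((x₁ + 1) / x₂) = T x₁ x₂ :=
  ⟨T_mutate_fst x₁_ne_zero x₂_pow_four_add_one_ne_zero, T_mutate_snd x₂_ne_zero x₁_add_one_ne_zero⟩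
end

section
/- The only positive integer solutions (x₁,x₂) of the Diophantine equation x₁²x₂ + x₁x₂² + 2x₁ + 2x₂ = 6x₁x₂ are (1,1), (2,1), (2,2), and (1,2). -/
/-- The only positive integer solutions of `x₁²x₂ + x₁x₂² + 2x₁ + 2x₂ = 6x₁x₂`
are `(1,1)`, `(2,1)`, `(2,2)` and `(1,2)`. -/
theorem stmt_8 (x₁ x₂ : ℕ) (h₁ : 0 < x₁) (h₂ : 0 < x₂) :
    x₁ ^ 2 * x₂ + x₁ * x₂ ^ 2 + 2 * x₁ + 2 * x₂ = 6 * x₁ * x₂ ↔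
      (x₁ = 1 ∧ x₂ = 1) ∨ (x₁ = 2 ∧ x₂ = 1) ∨ (x₁ = 2 ∧ x₂ = 2) ∨
        (x₁ = 1 ∧ x₂ = 2) := by
  constructor
  · intro h
    have hb : x₁ + x₂ < 6 := by nlinarith [mul_pos h₁ h₂]
    have hx1 : x₁ ≤ 5 := by omega
    have hx2 : x₂ ≤ 5 := by omega
    interval_cases x₁ <;> interval_cases x₂ <;> omega
  · rintro (⟨rfl, rfl⟩ | ⟨rfl, rfl⟩ | ⟨rfl, rfl⟩ | ⟨rfl, rfl⟩) <;> norm_num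
end

section
/- The only positive integer solutions (x₁,x₂) of the Diophantine equation x₁²x₂ + x₁x₂² + x₁² + x₂² + 2x₁ + 2x₂ + 1 = 9x₁x₂ are (1,1), (1,2), (2,1), (3,2), and (2,3). -/
/-- The only positive integer solutions of
`x₁²x₂ + x₁x₂² + x₁² + x₂² + 2x₁ + 2x₂ + 1 = 9x₁x₂` are
`(1,1)`, `(1,2)`, `(2,1)`, `(3,2)` and `(2,3)`. -/
theorem stmt_9 (x₁ x₂ : ℕ) (h₁ : 0 < x₁) (h₂ : 0 < x₂) :
    x₁ ^ 2 * x₂ + x₁ * x₂ ^ 2 + x₁ ^ 2 + x₂ ^ 2 + 2 * x₁ + 2 * x₂ + 1 =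
        9 * x₁ * x₂ ↔
      (x₁ = 1 ∧ x₂ = 1) ∨ (x₁ = 1 ∧ x₂ = 2) ∨ (x₁ = 2 ∧ x₂ = 1) ∨
        (x₁ = 3 ∧ x₂ = 2) ∨ (x₁ = 2 ∧ x₂ = 3) := by
  constructor
  · intro h
    have hb : x₁ + x₂ ≤ 8 := by
      by_contra hc
      have h9 : 9 * (x₁ * x₂) ≤ (x₁ + x₂) * (x₁ * x₂) :=
        Nat.mul_le_mul_right _ (by omega)
      nlinarith
    have hb₁ : x₁ ≤ 8 := by omega
    have hb₂ : x₂ ≤ 8 := by omega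
    interval_cases x₁ <;> interval_cases x₂ <;> omega
  · rintro (⟨rfl, rfl⟩ | ⟨rfl, rfl⟩ | ⟨rfl, rfl⟩ | ⟨rfl, rfl⟩ | ⟨rfl, rfl⟩) <;> norm_num
end

section
/- The only positive integer solutions (x₁,x₂) of the Diophantine equation x₂⁴ + x₁²x₂² + 2x₂² + x₁² + 2x₁ + 1 = 8x₁x₂² are (1,1), (2,1), (2,3), (5,3), (5,2), and (1,2). -/
/-- The only positive integer solutions of
`x₂⁴ + x₁²x₂² + 2x₂² + x₁² + 2x₁ + 1 = 8x₁x₂²` are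
`(1,1)`, `(2,1)`, `(2,3)`, `(5,3)`, `(5,2)` and `(1,2)`. -/
theorem stmt_10 (x₁ x₂ : ℕ) (h₁ : 0 < x₁) (h₂ : 0 < x₂) :
    x₂ ^ 4 + x₁ ^ 2 * x₂ ^ 2 + 2 * x₂ ^ 2 + x₁ ^ 2 + 2 * x₁ + 1 =
        8 * x₁ * x₂ ^ 2 ↔
      (x₁ = 1 ∧ x₂ = 1) ∨ (x₁ = 2 ∧ x₂ = 1) ∨ (x₁ = 2 ∧ x₂ = 3) ∨
        (x₁ = 5 ∧ x₂ = 3) ∨ (x₁ = 5 ∧ x₂ = 2) ∨ (x₁ = 1 ∧ x₂ = 2) := by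
  constructor
  · intro h
    have e2 : 0 < x₂ ^ 2 := pow_pos h₂ 2
    have hb1 : x₁ ≤ 8 := by
      by_contra hc
      push_neg at hc
      have h9 : 9 * x₁ ≤ x₁ ^ 2 := by nlinarith
      have := Nat.mul_le_mul_right (x₂ ^ 2) h9
      nlinarith [Nat.mul_pos h₁ e2]
    have hb2 : x₂ ≤ 8 := by
      by_contra hc
      push_neg at hc
      have hsq : 81 ≤ x₂ ^ 2 := by nlinarith
      have h9 : 81 * x₂ ^ 2 ≤ x₂ ^ 4 := by
        calc 81 * x₂ ^ 2 ≤ x₂ ^ 2 * x₂ ^ 2 := Nat.mul_le_mul_right _ hsq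
          _ = x₂ ^ 4 := by ring
      have h8 : 8 * x₁ * x₂ ^ 2 ≤ 64 * x₂ ^ 2 := by nlinarith
      nlinarith
    interval_cases x₁ <;> interval_cases x₂ <;> omega
  · rintro (⟨rfl, rfl⟩|⟨rfl, rfl⟩|⟨rfl, rfl⟩|⟨rfl, rfl⟩|⟨rfl, rfl⟩|⟨rfl, rfl⟩) <;> norm_num
end

section
/- The only positive integer solutions (x₁,x₂) of the Diophantine equation x₂⁴ + x₁x₂³ + x₂³ + x₁²x₂ + 2x₁x₂ + x₁² + x₂ + 2x₁ + 1 = 11x₁x₂² are (1,1), (2,1), (2,3), (14,3), (14,5), (9,5), (9,2), and (1,2). -/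
/-- The only positive integer solutions of
`x₂⁴ + x₁x₂³ + x₂³ + x₁²x₂ + 2x₁x₂ + x₁² + x₂ + 2x₁ + 1 = 11x₁x₂²` are
`(1,1)`, `(2,1)`, `(2,3)`, `(14,3)`, `(14,5)`, `(9,5)`, `(9,2)` and `(1,2)`. -/
theorem stmt_11 (x₁ x₂ : ℕ) (h₁ : 0 < x₁) (h₂ : 0 < x₂) :
    x₂ ^ 4 + x₁ * x₂ ^ 3 + x₂ ^ 3 + x₁ ^ 2 * x₂ + 2 * x₁ * x₂ + x₁ ^ 2 + x₂ +
        2 * x₁ + 1 = 11 * x₁ * x₂ ^ 2 ↔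
      (x₁ = 1 ∧ x₂ = 1) ∨ (x₁ = 2 ∧ x₂ = 1) ∨ (x₁ = 2 ∧ x₂ = 3) ∨
        (x₁ = 14 ∧ x₂ = 3) ∨ (x₁ = 14 ∧ x₂ = 5) ∨ (x₁ = 9 ∧ x₂ = 5) ∨
        (x₁ = 9 ∧ x₂ = 2) ∨ (x₁ = 1 ∧ x₂ = 2) := by
  constructor
  · intro h
    have hb2 : x₂ ≤ 10 := by
      by_contra hc
      push_neg at hc
      have h11 : 11 ≤ x₂ := hc
      nlinarith [Nat.mul_le_mul_right (x₁ * x₂ ^ 2) h11]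
    interval_cases x₂ <;>
      (have hb1 : x₁ ≤ 30 := by nlinarith) <;>
      interval_cases x₁ <;> omega
  · rintro (⟨rfl, rfl⟩ | ⟨rfl, rfl⟩ | ⟨rfl, rfl⟩ | ⟨rfl, rfl⟩ | ⟨rfl, rfl⟩ |
      ⟨rfl, rfl⟩ | ⟨rfl, rfl⟩ | ⟨rfl, rfl⟩) <;> norm_num
end

section
/- If (a,b) is a positive integer solution of a² + b² + 1 = 3ab, then a' = (b²+1)/a is a positive integer and (a',b) is also a solution; likewise b' = (a²+1)/b is a positive integer and (a,b') is a solution. -/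
/-- Mutations preserve positive integer solutions of `a² + b² + 1 = 3ab`:
both `a' = (b²+1)/a` and `b' = (a²+1)/b` are positive integers and give
new solutions. -/
theorem stmt_12 (a b : ℕ) (ha : 0 < a) (hb : 0 < b)
    (hsol : a ^ 2 + b ^ 2 + 1 = 3 * a * b) :
    (∃ a' : ℕ, 0 < a' ∧ a * a' = b ^ 2 + 1 ∧
      a' ^ 2 + b ^ 2 + 1 = 3 * a' * b) ∧
    (∃ b' : ℕ, 0 < b' ∧ b * b' = a ^ 2 + 1 ∧
      a ^ 2 + b' ^ 2 + 1 = 3 * a * b') := by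
  have h1 : a < 3 * b := by nlinarith
  have h2 : b < 3 * a := by nlinarith
  constructor
  · refine ⟨3 * b - a, by omega, ?_, ?_⟩
    · zify [le_of_lt h1]; nlinarith
    · zify [le_of_lt h1]; nlinarith
  · refine ⟨3 * a - b, by omega, ?_, ?_⟩
    · zify [le_of_lt h2]; nlinarith
    · zify [le_of_lt h2]; nlinarith
end

section
/- Every positive integer solution (a,b) of the equation a² + b² + 1 = 3ab can be obtained from (1,1) by a finite sequence of applications of the maps μ₁(a,b) = ((b²+1)/a, b) and μ₂(a,b) = (a, (a²+1)/b). -/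
/-- One step of mutation on pairs of positive integers:
`μ₁(a,b) = ((b²+1)/a, b)` or `μ₂(a,b) = (a, (a²+1)/b)`. -/
def mutStep (p q : ℕ × ℕ) : Prop :=
  q = ((p.2 ^ 2 + 1) / p.1, p.2) ∨ q = (p.1, (p.1 ^ 2 + 1) / p.2)

lemma stmt_13_aux : ∀ n a b : ℕ, a + b ≤ n → 0 < a → 0 < b →
    a ^ 2 + b ^ 2 + 1 = 3 * a * b →
    Relation.ReflTransGen mutStep (1, 1) (a, b) := by
  intro n
  induction n with
  | zero => intro a b hn ha hb _; omega
  | succ n ih =>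
    intro a b hn ha hb hsol
    rcases lt_trichotomy a b with h | h | h
    · -- a < b : jump on second coordinate, c = 3*a - b
      have h3 : b ≤ 3 * a := by nlinarith
      have hc3 : b + (3 * a - b) = 3 * a := by omega
      set c := 3 * a - b with hcdef
      have hac : b * c = a ^ 2 + 1 := by
        zify at hc3 hsol ⊢
        linear_combination b * hc3 - hsol
      have hcpos : 0 < c := by
        rcases Nat.eq_zero_or_pos c with h0 | h0
        · rw [h0, Nat.mul_zero] at hac; omega
        · exact h0
      have hlt : c < b := by
        have hb2 : a ^ 2 + 1 < b ^ 2 := by nlinarith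
        have : b * c < b * b := by rw [hac]; nlinarith
        exact Nat.lt_of_mul_lt_mul_left this
      have hnew : a ^ 2 + c ^ 2 + 1 = 3 * a * c := by
        zify at hc3 hac ⊢
        linear_combination c * hc3 - hac
      have hprev := ih a c (by omega) ha hcpos hnew
      refine hprev.tail (Or.inr ?_)
      have hdiv : (a ^ 2 + 1) / c = b :=
        Nat.div_eq_of_eq_mul_left hcpos (by linarith [hac])
      simp [hdiv]
    · -- a = b : then a = b = 1
      subst h
      have h1 : a * a = 1 := by nlinarith
      have h2 : a ≤ 1 := Nat.le_of_dvd one_pos ⟨a, h1.symm⟩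
      have : a = 1 := by omega
      rw [this]
    · -- a > b : jump on first coordinate, c = 3*b - a
      have h3 : a ≤ 3 * b := by nlinarith
      have hc3 : a + (3 * b - a) = 3 * b := by omega
      set c := 3 * b - a with hcdef
      have hac : a * c = b ^ 2 + 1 := by
        zify at hc3 hsol ⊢
        linear_combination a * hc3 - hsol
      have hcpos : 0 < c := by
        rcases Nat.eq_zero_or_pos c with h0 | h0
        · rw [h0, Nat.mul_zero] at hac; omega
        · exact h0
      have hlt : c < a := by
        have hb2 : b ^ 2 + 1 < a ^ 2 := by nlinarith
        have : a * c < a * a := by rw [hac]; nlinarith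
        exact Nat.lt_of_mul_lt_mul_left this
      have hnew : c ^ 2 + b ^ 2 + 1 = 3 * c * b := by
        zify at hc3 hac ⊢
        linear_combination c * hc3 - hac
      have hprev := ih c b (by omega) hcpos hb hnew
      refine hprev.tail (Or.inl ?_)
      have hdiv : (b ^ 2 + 1) / c = a :=
        Nat.div_eq_of_eq_mul_left hcpos (by linarith [hac])
      simp [hdiv]

/-- Every positive integer solution of `a² + b² + 1 = 3ab` is obtained from
`(1,1)` by finitely many applications of the mutations `μ₁`, `μ₂`. -/
theorem stmt_13 (a b : ℕ) (ha : 0 < a) (hb : 0 < b)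
    (hsol : a ^ 2 + b ^ 2 + 1 = 3 * a * b) :
    Relation.ReflTransGen mutStep (1, 1) (a, b) := by
  exact stmt_13_aux (a + b) a b le_rfl ha hb hsol
end

section
/- If (a,b) is a positive integer solution of b⁴ + a² + 2a + 1 = 5ab², then a' = (b⁴+1)/a is a positive integer and (a',b) is also a solution, and b' = (a+1)/b is a positive integer and (a,b') is also a solution. -/
/-- Mutations preserve positive integer solutions of `b⁴ + a² + 2a + 1 = 5ab²`:
both `a' = (b⁴+1)/a` and `b' = (a+1)/b` are positive integers and give
new solutions. -/
theorem stmt_14 (a b : ℕ) (ha : 0 < a) (hb : 0 < b)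
    (hsol : b ^ 4 + a ^ 2 + 2 * a + 1 = 5 * a * b ^ 2) :
    (∃ a' : ℕ, 0 < a' ∧ a * a' = b ^ 4 + 1 ∧
      b ^ 4 + a' ^ 2 + 2 * a' + 1 = 5 * a' * b ^ 2) ∧
    (∃ b' : ℕ, 0 < b' ∧ b * b' = a + 1 ∧
      b' ^ 4 + a ^ 2 + 2 * a + 1 = 5 * a * b' ^ 2) := by
  constructor
  · -- a' = 5b² - 2 - a
    have hle : a + 2 < 5 * b ^ 2 := by nlinarith
    refine ⟨5 * b ^ 2 - 2 - a, by omega, ?_, ?_⟩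
    · have h5 : (5 * b ^ 2 - 2 - a) + (a + 2) = 5 * b ^ 2 := by omega
      nlinarith [h5]
    · have h5 : (5 * b ^ 2 - 2 - a) + (a + 2) = 5 * b ^ 2 := by omega
      have hprod : a * (5 * b ^ 2 - 2 - a) = b ^ 4 + 1 := by nlinarith [h5]
      nlinarith [h5, hprod]
  · -- b' = (a+1)/b
    have hb2 : b ^ 2 < 5 * a := by nlinarith
    have hsq : (a + 1) ^ 2 = b ^ 2 * (5 * a - b ^ 2) := by
      have : b ^ 2 + (5 * a - b ^ 2) = 5 * a := by omega
      nlinarith [this]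
    have hdvd2 : b ^ 2 ∣ (a + 1) ^ 2 := ⟨5 * a - b ^ 2, hsq⟩
    have hdvd : b ∣ a + 1 := (Nat.pow_dvd_pow_iff (by norm_num)).mp hdvd2
    obtain ⟨b', hb'⟩ := hdvd
    refine ⟨b', by nlinarith [hb'], hb'.symm, ?_⟩
    have hsum : b' ^ 2 + b ^ 2 = 5 * a := by
      have h1 : b ^ 2 * (b' ^ 2 + b ^ 2) = b ^ 2 * (5 * a) := by nlinarith [hb']
      exact Nat.eq_of_mul_eq_mul_left (by positivity) h1
    calc b' ^ 4 + a ^ 2 + 2 * a + 1 = b' ^ 4 + (a + 1) ^ 2 := by ring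
      _ = b' ^ 4 + (b * b') ^ 2 := by rw [← hb']
      _ = (b' ^ 2 + b ^ 2) * b' ^ 2 := by ring
      _ = 5 * a * b' ^ 2 := by rw [hsum]
end

section
/- Let (a,b) be a positive integer solution of b⁴ + a² + 2a + 1 = 5ab² with a ≠ 1 and b ≠ 1, and let a' = (b⁴+1)/a. If a > b², then a' < b² < a; if a < b², then a' > b² > a. -/
/-- Let `(a,b)` be a positive integer solution of `b⁴ + a² + 2a + 1 = 5ab²`
with `a ≠ 1`, `b ≠ 1`, and let `a'` satisfy `a·a' = b⁴ + 1`
(i.e. `a' = (b⁴+1)/a`). If `a > b²` then `a' < b² < a`; if `a < b²` then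
`a' > b² > a`. -/
theorem stmt_16 (a b a' : ℕ) (ha : 0 < a) (hb : 0 < b)
    (hsol : b ^ 4 + a ^ 2 + 2 * a + 1 = 5 * a * b ^ 2)
    (ha1 : a ≠ 1) (hb1 : b ≠ 1) (ha' : a * a' = b ^ 4 + 1) :
    (b ^ 2 < a → a' < b ^ 2 ∧ b ^ 2 < a) ∧
    (a < b ^ 2 → b ^ 2 < a' ∧ a < b ^ 2) := by
  have hb2 : 2 ≤ b := by omega
  constructor
  · intro h
    refine ⟨?_, h⟩
    have h1 : a * a' < a * b ^ 2 := by nlinarith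
    exact lt_of_mul_lt_mul_left h1 (Nat.zero_le a)
  · intro h
    refine ⟨?_, h⟩
    have h1 : a * b ^ 2 < a * a' := by nlinarith
    exact lt_of_mul_lt_mul_left h1 (Nat.zero_le a)
end

section
/- Let (a,b) be a positive integer solution of b⁴ + a² + 2a + 1 = 5ab² with a ≠ 1 and b ≠ 1, and let b' = (a+1)/b. If a > b², then b'² > a > b²; if a < b², then b'² < a < b². -/
/-- Let `(a,b)` be a positive integer solution of `b⁴ + a² + 2a + 1 = 5ab²`
with `a ≠ 1`, `b ≠ 1`, and let `b'` satisfy `b·b' = a + 1`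
(i.e. `b' = (a+1)/b`). If `a > b²` then `b'² > a > b²`; if `a < b²` then
`b'² < a < b²`. -/
theorem stmt_17 (a b b' : ℕ) (ha : 0 < a) (hb : 0 < b)
    (hsol : b ^ 4 + a ^ 2 + 2 * a + 1 = 5 * a * b ^ 2)
    (ha1 : a ≠ 1) (hb1 : b ≠ 1) (hb' : b * b' = a + 1) :
    (b ^ 2 < a → a < b' ^ 2 ∧ b ^ 2 < a) ∧
    (a < b ^ 2 → b' ^ 2 < a ∧ a < b ^ 2) := by
  have hb2 : 2 ≤ b := by omega
  have ha2 : 2 ≤ a := by omega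
  -- key identity : b'^2 + b^2 = 5*a
  have hsq : b ^ 2 * b' ^ 2 = (a + 1) ^ 2 := by
    have := congrArg (· ^ 2) hb'
    simpa [mul_pow] using this
  have hkey : b ^ 2 * (b' ^ 2 + b ^ 2) = b ^ 2 * (5 * a) := by
    ring_nf
    nlinarith [hsq, hsol]
  have hkey2 : b' ^ 2 + b ^ 2 = 5 * a :=
    Nat.eq_of_mul_eq_mul_left (by positivity) hkey
  constructor
  · intro h
    refine ⟨?_, h⟩
    omega
  · intro h
    refine ⟨?_, h⟩
    -- need b^2 > 4a
    by_contra hc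
    push_neg at hc
    have h4 : b ^ 2 ≤ 4 * a := by omega
    -- cast to integers and get contradiction
    have hA : (2 : ℤ) ≤ (a : ℤ) := by exact_mod_cast ha2
    have hB : (4 : ℤ) ≤ ((b : ℤ) ^ 2) := by
      have : (2 : ℤ) ≤ (b : ℤ) := by exact_mod_cast hb2
      nlinarith
    have hlt : (a : ℤ) < (b : ℤ) ^ 2 := by exact_mod_cast h
    have hle : ((b : ℤ) ^ 2) ≤ 4 * a := by exact_mod_cast h4
    have heq : (b : ℤ) ^ 4 + (a : ℤ) ^ 2 + 2 * a + 1 = 5 * a * (b : ℤ) ^ 2 := by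
      exact_mod_cast hsol
    nlinarith [mul_nonneg (sub_nonneg.2 hA) (by linarith : (0:ℤ) ≤ (b:ℤ)^2 - 1 - a),
      mul_nonneg (by linarith : (0:ℤ) ≤ 4*(a:ℤ) - (b:ℤ)^2) (by linarith : (0:ℤ) ≤ (b:ℤ)^2 - 1 - a),
      mul_nonneg (by linarith : (0:ℤ) ≤ 4*(a:ℤ) - (b:ℤ)^2) (sub_nonneg.2 hA)]
end
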